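/- Let W be a Coxeter group, J ⊆ S, and w = w^J w_J a parabolic decomposition. Then the multiplication map ([e, w^J] ∩ W^J) × [e, w_J] → [e, w], (x, y) ↦ xy, is injective with image contained in the Bruhat interval [e, w]. -/

import Mathlib

variable {B W : Type*}

/-- Bruhat order on a Coxeter group: the reflexive-transitive closure of the
relation `u < ut` for reflections `t` with `ℓ(u) < ℓ(ut)`. -/
def CoxeterSystem.bruhatLE [Group W] {M : CoxeterMatrix B} (cs : CoxeterSystem M W)
    (u v : W) : Prop :=
  Relation.ReflTransGen
    (fun x y => cs.length x < cs.length y ∧ ∃ t, cs.IsReflection t ∧ y = x * t) u v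

namespace CoxeterSystem
variable [Group W] {M : CoxeterMatrix B} (cs : CoxeterSystem M W)

local prefix:100 "s" => cs.simple
local prefix:100 "π" => cs.wordProd
local prefix:100 "ℓ" => cs.length

open List

noncomputable section
attribute [local instance] Classical.propDecidable

private def sigmaFun (i : B) : W × ZMod 2 → W × ZMod 2 :=
  fun p => (s i * p.1 * s i, p.2 + if p.1 = s i then 1 else 0)

private lemma sigmaFun_invol (i : B) : Function.Involutive (cs.sigmaFun i) := by
  intro p
  unfold sigmaFun
  have h1 : s i * (s i * p.1 * s i) * s i = p.1 := by
    rw [← mul_assoc, ← mul_assoc, cs.simple_mul_simple_self, one_mul,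
      mul_assoc, cs.simple_mul_simple_self, mul_one]
  have h2 : (s i * p.1 * s i = s i) ↔ (p.1 = s i) := by
    constructor
    · intro h
      have := congrArg (fun x => s i * x * s i) h
      simpa [h1, ← mul_assoc, cs.simple_mul_simple_self] using this
    · intro h; rw [h, cs.simple_mul_simple_self, one_mul]
  apply Prod.ext
  · exact h1
  · simp only [h2, add_assoc]
    rcases em (p.1 = s i) with h | h <;> simp [h]
    decide

private def sigmaPerm (i : B) : Equiv.Perm (W × ZMod 2) :=
  (cs.sigmaFun_invol i).toPerm

private lemma sigmaPerm_apply (i : B) (p : W × ZMod 2) :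
    cs.sigmaPerm i p = (s i * p.1 * s i, p.2 + if p.1 = s i then 1 else 0) := rfl

private lemma prod_map_sigmaPerm (ω : List B) (t : W) (ε : ZMod 2) :
    ((ω.map cs.sigmaPerm).prod) (t, ε) =
      (π ω * t * (π ω)⁻¹, ε + ((cs.rightInvSeq ω).count t : ZMod 2)) := by
  induction ω with
  | nil => simp
  | cons i ω ih =>
    rw [map_cons, prod_cons, Equiv.Perm.mul_apply, ih, sigmaPerm_apply]
    have hris : cs.rightInvSeq (i :: ω) = ((π ω)⁻¹ * (s i) * (π ω)) :: cs.rightInvSeq ω := rfl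
    apply Prod.ext
    · simp only [wordProd_cons, mul_inv_rev, cs.inv_simple]
      group
    · simp only [hris, count_cons]
      have hiff : (π ω * t * (π ω)⁻¹ = s i) ↔ (t = (π ω)⁻¹ * s i * π ω) := by
        constructor
        · intro h
          rw [← h]; group
        · intro h
          rw [h]; group
      have hbeq : ((π ω)⁻¹ * s i * π ω == t) = decide (π ω * t * (π ω)⁻¹ = s i) := by
        rw [Bool.beq_eq_decide_eq, decide_eq_decide, hiff, eq_comm]
      rw [hbeq]
      rcases em (π ω * t * (π ω)⁻¹ = s i) with h | h <;>
        simp [h, add_assoc, add_comm]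


private lemma drop_alternatingWord (i j : B) (d n : ℕ) :
    (alternatingWord i j n).drop d = alternatingWord i j (n - d) := by
  induction d generalizing n with
  | zero => simp
  | succ d ih =>
    rcases n with _ | n
    · simp [alternatingWord]
    · rw [alternatingWord_succ' i j n, drop_succ_cons, ih n]
      congr 1
      omega

private lemma alt_E (i j : B) (r : ℕ) :
    (π (alternatingWord i j r))⁻¹ * π (alternatingWord i j (r + 1)) =
      (s j * s i) ^ r * s j := by
  have hpq : (s i * s j)⁻¹ = s j * s i := by
    rw [mul_inv_rev, cs.inv_simple, cs.inv_simple]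
  have hsc : ∀ n : ℕ, s j * (s i * s j) ^ n = (s j * s i) ^ n * s j := by
    intro n
    have h : SemiconjBy (s j) (s i * s j) (s j * s i) := by
      unfold SemiconjBy
      group
    exact (h.pow_right n).eq
  rcases Nat.even_or_odd r with ⟨d, hd⟩ | ⟨d, hd⟩
  · have h1 : Even r := ⟨d, hd⟩
    have h2 : ¬ Even (r + 1) := by rw [Nat.even_iff]; rw [Nat.even_iff] at h1; omega
    rw [cs.prod_alternatingWord_eq_mul_pow, cs.prod_alternatingWord_eq_mul_pow,
      if_pos h1, if_neg h2]
    have h3 : (r + 1) / 2 = d := by omega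
    have h4 : r / 2 = d := by omega
    rw [h3, h4, one_mul, hsc d, ← inv_pow, hpq, ← mul_assoc, ← pow_add, ← hd]
  · have h1 : ¬ Even r := by rw [Nat.even_iff]; omega
    have h2 : Even (r + 1) := by rw [Nat.even_iff]; omega
    rw [cs.prod_alternatingWord_eq_mul_pow, cs.prod_alternatingWord_eq_mul_pow,
      if_neg h1, if_pos h2]
    have h3 : (r + 1) / 2 = d + 1 := by omega
    have h4 : r / 2 = d := by omega
    rw [h3, h4, one_mul, mul_inv_rev, cs.inv_simple, mul_assoc, hsc (d+1),
      ← mul_assoc, ← inv_pow, hpq, ← pow_add,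
      show d + (d + 1) = r by omega]

private lemma alt_cons (i j : B) (n : ℕ) (hn : 0 < n) :
    alternatingWord i j n = (if Even (n - 1) then j else i) :: alternatingWord i j (n - 1) := by
  rcases n with _ | n'
  · omega
  · simpa using alternatingWord_succ' i j n'

private lemma ris_alt_getD (i j : B) (n k : ℕ) (hk : k < n) :
    (cs.rightInvSeq (alternatingWord i j n)).getD k 1 =
      (π (alternatingWord i j (n - k - 1)))⁻¹ * π (alternatingWord i j (n - k)) := by
  rw [cs.getD_rightInvSeq, drop_alternatingWord]
  have hnk : n - (k + 1) = (n - k - 1) := by omega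
  rw [hnk]
  have hcons : alternatingWord i j (n - k) =
      (if Even (n - k - 1) then j else i) :: alternatingWord i j (n - k - 1) :=
    alt_cons i j (n - k) (by omega)
  have hget : (alternatingWord i j n)[k]? =
      some (if Even (n - k - 1) then j else i) := by
    have hdrop := drop_alternatingWord i j k n
    have h5 : (alternatingWord i j n)[k]? = ((alternatingWord i j n).drop k)[0]? := by
      rw [List.getElem?_drop]
      norm_num
    rw [h5, hdrop, hcons]
    rfl
  rw [hget, hcons, cs.wordProd_cons]
  simp [mul_assoc]

private lemma ris_alt_period (i j : B) (k : ℕ) (hk : k < M i j) :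
    (cs.rightInvSeq (alternatingWord i j (2 * M i j))).getD (k + M i j) 1 =
      (cs.rightInvSeq (alternatingWord i j (2 * M i j))).getD k 1 := by
  set m := M i j with hm
  have h1 : 2 * m - (k + m) - 1 = m - k - 1 := by omega
  have h2 : 2 * m - (k + m) = (m - k - 1) + 1 := by omega
  have h3 : 2 * m - k - 1 = (m - k - 1) + m := by omega
  have h4 : 2 * m - k = ((m - k - 1) + m) + 1 := by omega
  rw [ris_alt_getD cs i j _ _ (by omega), ris_alt_getD cs i j _ _ (by omega),
    h1, h2, h3, h4, alt_E, alt_E, pow_add]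
  have : (s j * s i) ^ m = 1 := by
    have := cs.simple_mul_simple_pow' i j
    rwa [hm]
  rw [this, mul_one]


private lemma count_ris_alt_even (i j : B) (t : W) :
    Even ((cs.rightInvSeq (alternatingWord i j (2 * M i j))).count t) := by
  set m := M i j with hm
  set L := cs.rightInvSeq (alternatingWord i j (2 * m)) with hL
  have hlen : L.length = 2 * m := by
    rw [hL, length_rightInvSeq, length_alternatingWord]
  have hsplit : L = L.take m ++ L.drop m := (List.take_append_drop m L).symm
  have heq : L.drop m = L.take m := by
    apply List.ext_getElem
    · rw [List.length_drop, List.length_take]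
      omega
    · intro x h1 h2
      have hx : x < m := by
        rw [List.length_drop] at h1
        omega
      rw [List.getElem_drop, List.getElem_take]
      rw [← List.getD_eq_getElem L 1, ← List.getD_eq_getElem L 1,
        show m + x = x + m by omega]
      exact ris_alt_period cs i j x hx
  rw [hsplit, List.count_append]
  rw [heq]
  exact ⟨_, rfl⟩

private lemma sigma_liftable : M.IsLiftable cs.sigmaPerm := by
  intro i j
  have key : ∀ m : ℕ, ((alternatingWord i j (2 * m)).map cs.sigmaPerm).prod =
      (cs.sigmaPerm i * cs.sigmaPerm j) ^ m := by
    intro m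
    induction m with
    | zero => simp [alternatingWord]
    | succ m ih =>
      have h1 : 2 * (m + 1) = (2 * m + 1) + 1 := by omega
      have h2 : alternatingWord i j (2 * (m + 1)) = i :: j :: alternatingWord i j (2 * m) := by
        rw [h1, alternatingWord_succ' i j (2 * m + 1), alternatingWord_succ' i j (2 * m)]
        have : ¬ Even (2 * m + 1) := by rw [Nat.even_iff]; omega
        rw [if_neg this, if_pos (by exact ⟨m, by omega⟩)]
      rw [h2, map_cons, map_cons, prod_cons, prod_cons, ih, ← mul_assoc, pow_succ']
  apply Equiv.ext
  intro p
  obtain ⟨t, ε⟩ := p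
  rw [← key (M i j), prod_map_sigmaPerm]
  have h1 : π (alternatingWord i j (2 * M i j)) = 1 := by
    rw [cs.prod_alternatingWord_eq_mul_pow]
    rw [if_pos ⟨M i j, by omega⟩]
    have : 2 * M i j / 2 = M i j := by omega
    rw [this, one_mul, cs.simple_mul_simple_pow]
  have h2 : ((cs.rightInvSeq (alternatingWord i j (2 * M i j))).count t : ZMod 2) = 0 := by
    obtain ⟨c, hc⟩ := count_ris_alt_even cs i j t
    rw [hc]
    push_cast
    ring_nf
    rw [show (2 : ZMod 2) = 0 by decide]
    ring
  rw [h1, h2]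
  simp

/-- The reflection-cocycle permutation representation of `W`. -/
private def brRep : W →* Equiv.Perm (W × ZMod 2) :=
  cs.lift ⟨cs.sigmaPerm, cs.sigma_liftable⟩

private lemma brRep_simple (i : B) : cs.brRep (s i) = cs.sigmaPerm i :=
  cs.lift_apply_simple cs.sigma_liftable i

private lemma brRep_wordProd (ω : List B) : cs.brRep (π ω) = (ω.map cs.sigmaPerm).prod := by
  unfold wordProd
  rw [map_list_prod, List.map_map]
  congr 1
  apply List.map_congr_left
  intro i _
  exact cs.brRep_simple i

/-- `ν w t` is the mod-2 count of `t` in the right inversion sequence of any word for `w`. -/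
private def nu (w t : W) : ZMod 2 := (cs.brRep w (t, 0)).2

private lemma nu_wordProd (ω : List B) (t : W) :
    cs.nu (π ω) t = ((cs.rightInvSeq ω).count t : ZMod 2) := by
  unfold nu
  rw [cs.brRep_wordProd, prod_map_sigmaPerm]
  simp

private lemma brRep_apply (w t : W) (ε : ZMod 2) :
    cs.brRep w (t, ε) = (w * t * w⁻¹, ε + cs.nu w t) := by
  obtain ⟨ω, hω⟩ := cs.wordProd_surjective w
  subst hω
  rw [cs.brRep_wordProd, prod_map_sigmaPerm, cs.nu_wordProd]

private lemma nu_mul (w v t : W) :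
    cs.nu (w * v) t = cs.nu v t + cs.nu w (v * t * v⁻¹) := by
  have h3 : cs.brRep (w * v) (t, 0) = cs.brRep w (cs.brRep v (t, 0)) := by
    rw [map_mul]; rfl
  rw [cs.brRep_apply v t 0, cs.brRep_apply w (v * t * v⁻¹) (0 + cs.nu v t)] at h3
  have h4 := congrArg Prod.snd h3
  rw [cs.brRep_apply] at h4
  simpa [add_assoc] using h4

private lemma nu_one (t : W) : cs.nu 1 t = 0 := by
  unfold nu
  simp

private lemma nu_simple (i : B) : cs.nu (s i) (s i) = 1 := by
  unfold nu
  rw [cs.brRep_simple, sigmaPerm_apply]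
  simp

private lemma nu_self {t : W} (ht : cs.IsReflection t) : cs.nu t t = 1 := by
  obtain ⟨u, i, rfl⟩ := ht
  have key1 : (u * s i * u⁻¹ : W) = (u * s i) * u⁻¹ := by group
  have h1 : cs.nu (u * s i * u⁻¹) (u * s i * u⁻¹) =
      cs.nu (u⁻¹) (u * s i * u⁻¹) + cs.nu (u * s i) (s i) := by
    rw [key1, cs.nu_mul]
    congr 2
    group
  have h2 : cs.nu (u * s i) (s i) = cs.nu (s i) (s i) + cs.nu u (s i) := by
    rw [cs.nu_mul]
    congr 2
    rw [cs.inv_simple, cs.simple_mul_simple_self, one_mul]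
  have h3 : cs.nu (u⁻¹) (u * s i * u⁻¹) + cs.nu u (s i) = 0 := by
    have h := cs.nu_mul u u⁻¹ (u * s i * u⁻¹)
    rw [mul_inv_cancel, cs.nu_one] at h
    have harg : u⁻¹ * (u * s i * u⁻¹) * u⁻¹⁻¹ = s i := by group
    rw [harg] at h
    exact h.symm
  rw [h1, h2, cs.nu_simple]
  have : cs.nu (u⁻¹) (u * s i * u⁻¹) + (1 + cs.nu u (s i)) =
      (cs.nu (u⁻¹) (u * s i * u⁻¹) + cs.nu u (s i)) + 1 := by ring
  rw [this, h3, zero_add]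

private lemma nu_eq_one_of_inversion {w t : W} (ht : cs.IsReflection t)
    (hl : ℓ (w * t) < ℓ w) : cs.nu w t = 1 := by
  rcases (by decide : ∀ c : ZMod 2, c = 0 ∨ c = 1) (cs.nu w t) with h0 | h1
  · exfalso
    have hwt : cs.nu (w * t) t = 1 := by
      rw [cs.nu_mul]
      have : t * t * t⁻¹ = t := by rw [mul_assoc, mul_inv_cancel, mul_one]
      rw [this, cs.nu_self ht, h0, add_zero]
    obtain ⟨ψ, hψred, hψ⟩ := cs.exists_reduced_word' (w * t)
    rw [hψ, cs.nu_wordProd] at hwt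
    have hmem : t ∈ cs.rightInvSeq ψ := by
      by_contra hmem
      rw [List.count_eq_zero_of_not_mem hmem] at hwt
      simp at hwt
    have hinv := cs.isRightInversion_of_mem_rightInvSeq hψred hmem
    rw [← hψ] at hinv
    have : ℓ (w * t * t) < ℓ (w * t) := hinv.2
    rw [mul_assoc, ht.mul_self, mul_one] at this
    omega
  · exact h1

/-- Strong exchange property. -/
private lemma strongExchange {t w : W} (ht : cs.IsReflection t) (hl : ℓ (w * t) < ℓ w)
    (ω : List B) (hω : π ω = w) : ∃ j < ω.length, π (ω.eraseIdx j) = w * t := by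
  have h1 : cs.nu w t = 1 := cs.nu_eq_one_of_inversion ht hl
  rw [← hω, cs.nu_wordProd] at h1
  have hmem : t ∈ cs.rightInvSeq ω := by
    by_contra hmem
    rw [List.count_eq_zero_of_not_mem hmem] at h1
    simp at h1
  obtain ⟨j, hj, hget⟩ := List.getElem_of_mem hmem
  have hjlen : j < ω.length := by
    rwa [length_rightInvSeq] at hj
  refine ⟨j, hjlen, ?_⟩
  have := cs.wordProd_mul_getD_rightInvSeq ω j
  rw [List.getD_eq_getElem _ 1 hj, hget] at this
  rw [← this, hω]


private lemma sublist_concat_cases {α : Type*} (σ ω : List α) (a : α) (h : σ.Sublist (ω ++ [a])) :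
    σ.Sublist ω ∨ ∃ σ₀, σ = σ₀ ++ [a] ∧ σ₀.Sublist ω := by
  rw [List.sublist_append_iff] at h
  obtain ⟨l₁, l₂, rfl, h₁, h₂⟩ := h
  rcases l₂ with _ | ⟨b, l₃⟩
  · left
    simpa using h₁
  · have hb : b = a ∧ l₃ = [] := by
      cases h₂ with
      | cons _ h3 => simp at h3
      | cons_cons _ h3 => exact ⟨rfl, List.sublist_nil.mp h3⟩
    obtain ⟨rfl, rfl⟩ := hb
    exact Or.inr ⟨l₁, rfl, h₁⟩

private lemma deletion_aux : ∀ n (ω : List B), ω.length ≤ n →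
    ∃ σ, σ.Sublist ω ∧ cs.IsReduced σ ∧ π σ = π ω := by
  intro n
  induction n using Nat.strong_induction_on with
  | _ n ih =>
  intro ω hn
  rcases em (cs.IsReduced ω) with hred | hred
  · exact ⟨ω, List.Sublist.refl ω, hred, rfl⟩
  rcases ω.eq_nil_or_concat with rfl | ⟨ω₀, i, rfl⟩
  · exact absurd (by simp [IsReduced]) hred
  rw [List.concat_eq_append] at *
  have hlen : ω₀.length + 1 ≤ n := by simpa using hn
  rcases em (cs.IsReduced ω₀) with h₀ | h₀
  · -- ω₀ reduced but ω₀ ++ [a] not reduced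
    have hlπ : ℓ (π ω₀) = ω₀.length := h₀
    have hπ : π (ω₀ ++ [i]) = π ω₀ * s i := by rw [cs.wordProd_append, cs.wordProd_singleton]
    have hdesc : ℓ (π ω₀ * s i) < ℓ (π ω₀) := by
      rcases cs.length_mul_simple (π ω₀) i with h | h
      · exfalso
        apply hred
        unfold IsReduced
        rw [hπ, h, hlπ]
        simp
      · omega
    obtain ⟨j, hj, hje⟩ := cs.strongExchange (cs.isReflection_simple i) hdesc ω₀ rfl
    have hel : (ω₀.eraseIdx j).length + 1 = ω₀.length := List.length_eraseIdx_add_one hj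
    obtain ⟨σ, hσs, hσred, hσπ⟩ := ih (n-1) (by omega) (ω₀.eraseIdx j) (by omega)
    refine ⟨σ, ?_, hσred, ?_⟩
    · exact hσs.trans ((ω₀.eraseIdx_sublist j).trans (List.sublist_append_left ω₀ [i]))
    · rw [hσπ, hje, hπ]
  · -- recurse on ω₀ first
    obtain ⟨σ₀, hσ₀s, hσ₀red, hσ₀π⟩ := ih (n-1) (by omega) ω₀ (by omega)
    have hσ₀len : σ₀.length = ℓ (π ω₀) := by
      have h1 : ℓ (π σ₀) = σ₀.length := hσ₀red
      rw [hσ₀π] at h1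
      omega
    have hω₀lt : ℓ (π ω₀) < ω₀.length := by
      rcases Nat.lt_or_ge (ℓ (π ω₀)) ω₀.length with h | h
      · exact h
      · exact absurd (le_antisymm (cs.length_wordProd_le ω₀) h) h₀
    obtain ⟨σ, hσs, hσred, hσπ⟩ := ih (n-1) (by omega) (σ₀ ++ [i])
      (by simp only [List.length_append, List.length_singleton]; omega)
    refine ⟨σ, hσs.trans (hσ₀s.append (List.Sublist.refl [i])), hσred, ?_⟩
    rw [hσπ, cs.wordProd_append, cs.wordProd_append, hσ₀π]

private lemma deletion (ω : List B) : ∃ σ, σ.Sublist ω ∧ cs.IsReduced σ ∧ π σ = π ω :=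
  cs.deletion_aux ω.length ω le_rfl

private lemma subword_of_le {u w : W} (h : cs.bruhatLE u w) :
    ∀ ω, cs.IsReduced ω → π ω = w → ∃ σ, σ.Sublist ω ∧ cs.IsReduced σ ∧ π σ = u := by
  induction h with
  | refl => exact fun ω hred hω => ⟨ω, List.Sublist.refl ω, hred, hω⟩
  | @tail v w' hchain hstep ih =>
    obtain ⟨hlen, t, ht, rfl⟩ := hstep
    intro ω hred hω
    have h1 : π ω * t = v := by rw [hω, mul_assoc, ht.mul_self, mul_one]
    have h2 : ℓ (π ω * t) < ℓ (π ω) := by rw [h1, hω]; exact hlen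
    obtain ⟨j, hj, hje⟩ := cs.strongExchange ht h2 ω rfl
    obtain ⟨τ, hτs, hτred, hτπ⟩ := cs.deletion (ω.eraseIdx j)
    have hτv : π τ = v := by rw [hτπ, hje, h1]
    obtain ⟨σ, hσs, hσred, hσπ⟩ := ih τ hτred hτv
    exact ⟨σ, hσs.trans (hτs.trans (ω.eraseIdx_sublist j)), hσred, hσπ⟩


private lemma triple : ∀ n : ℕ,
    (∀ ω σ : List B, ω.length ≤ n → cs.IsReduced ω → σ.Sublist ω → cs.IsReduced σ →
        cs.bruhatLE (π σ) (π ω)) ∧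
    (∀ u w : W, ∀ i : B, cs.bruhatLE u w → ℓ (w * s i) ≤ n → ℓ u < ℓ (u * s i) →
        ℓ w < ℓ (w * s i) → cs.bruhatLE (u * s i) (w * s i)) ∧
    (∀ u v : W, ∀ i : B, ℓ v ≤ n → cs.bruhatLE u v → ℓ u < ℓ (u * s i) →
        ℓ (v * s i) < ℓ v → cs.bruhatLE (u * s i) v) := by
  intro n
  induction n using Nat.strong_induction_on with
  | _ n ih =>
  -- Lifting property K
  have hK : ∀ u w : W, ∀ i : B, cs.bruhatLE u w → ℓ (w * s i) ≤ n → ℓ u < ℓ (u * s i) →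
      ℓ w < ℓ (w * s i) → cs.bruhatLE (u * s i) (w * s i) := by
    intro u w i hle
    induction hle with
    | refl => exact fun _ _ _ => Relation.ReflTransGen.refl
    | @tail v w' hchain hstep ihc =>
      obtain ⟨hlvw, t, ht, rfl⟩ := hstep
      intro hn hu hw
      rcases Nat.lt_or_ge (ℓ v) (ℓ (v * s i)) with hvs | hvs
      · have hvs1 : ℓ (v * s i) = ℓ v + 1 := by
          rcases cs.length_mul_simple v i with h | h <;> omega
        have h1 : cs.bruhatLE (u * s i) (v * s i) := ihc (by omega) hu hvs
        refine h1.tail ⟨?_, s i * t * s i, ?_, ?_⟩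
        · omega
        · have := ht.conj (s i)
          rwa [cs.inv_simple] at this
        · simp [mul_assoc, cs.simple_mul_simple_cancel_left]
      · have hlt : ℓ (v * s i) < ℓ v :=
          lt_of_le_of_ne hvs (cs.length_mul_simple_ne v i)
        have hus_v : cs.bruhatLE (u * s i) v :=
          (ih (n-1) (by omega)).2.2 u v i (by omega) hchain hu hlt
        exact (hus_v.tail ⟨hlvw, t, ht, rfl⟩).tail ⟨hw, s i, cs.isReflection_simple i, rfl⟩
  -- Subword property CP
  have hCP : ∀ ω σ : List B, ω.length ≤ n → cs.IsReduced ω → σ.Sublist ω → cs.IsReduced σ →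
      cs.bruhatLE (π σ) (π ω) := by
    intro ω σ hn hωred hsub hσred
    rcases ω.eq_nil_or_concat with rfl | ⟨ω₀, i, rfl⟩
    · rw [List.sublist_nil.mp hsub]
      exact Relation.ReflTransGen.refl
    rw [List.concat_eq_append] at *
    have hω₀red : cs.IsReduced ω₀ := by
      have := hωred.take ω₀.length
      rwa [List.take_left] at this
    have hωlen : ℓ (π (ω₀ ++ [i])) = ω₀.length + 1 := by
      have h1 : ℓ (π (ω₀ ++ [i])) = (ω₀ ++ [i]).length := hωred
      simpa using h1
    have hπω : π (ω₀ ++ [i]) = π ω₀ * s i := by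
      rw [cs.wordProd_append, cs.wordProd_singleton]
    have hω₀len : ℓ (π ω₀) = ω₀.length := hω₀red
    have hlenn : ω₀.length + 1 ≤ n := by simpa using hn
    rcases sublist_concat_cases σ ω₀ i hsub with hcase | ⟨σ₀, rfl, hσ₀s⟩
    · have h1 : cs.bruhatLE (π σ) (π ω₀) :=
        (ih (n-1) (by omega)).1 ω₀ σ (by omega) hω₀red hcase hσred
      refine h1.tail ⟨?_, s i, cs.isReflection_simple i, hπω⟩
      rw [← hπω] at *
      omega
    · have hσ₀red : cs.IsReduced σ₀ := by
        have := hσred.take σ₀.length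
        rwa [List.take_left] at this
      have hσ₀len : ℓ (π σ₀) = σ₀.length := hσ₀red
      have hσlen : ℓ (π (σ₀ ++ [i])) = σ₀.length + 1 := by
        have h1 : ℓ (π (σ₀ ++ [i])) = (σ₀ ++ [i]).length := hσred
        simpa using h1
      have hπσ : π (σ₀ ++ [i]) = π σ₀ * s i := by
        rw [cs.wordProd_append, cs.wordProd_singleton]
      have h1 : cs.bruhatLE (π σ₀) (π ω₀) :=
        (ih (n-1) (by omega)).1 ω₀ σ₀ (by omega) hω₀red hσ₀s hσ₀red
      rw [hπσ, hπω]
      apply hK (π σ₀) (π ω₀) i h1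
      · rw [← hπω]; omega
      · rw [← hπσ]; omega
      · rw [← hπω]; omega
  -- Lifting property L'
  have hL : ∀ u v : W, ∀ i : B, ℓ v ≤ n → cs.bruhatLE u v → ℓ u < ℓ (u * s i) →
      ℓ (v * s i) < ℓ v → cs.bruhatLE (u * s i) v := by
    intro u v i hn hle hu hv
    obtain ⟨τ, hτred', hτπ⟩ := cs.exists_reduced_word (v * s i)
    have hτlen : τ.length = ℓ (v * s i) := by rw [hτπ]; exact hτred'.symm
    have hωπ : π (τ ++ [i]) = v := by
      rw [cs.wordProd_append, cs.wordProd_singleton, ← hτπ, cs.simple_mul_simple_cancel_right]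
    have hvlen : ℓ v = ℓ (v * s i) + 1 := by
      rcases cs.length_mul_simple v i with h | h <;> omega
    have hωred : cs.IsReduced (τ ++ [i]) := by
      show ℓ (π (τ ++ [i])) = _
      rw [hωπ]
      simp only [List.length_append, List.length_singleton]
      omega
    obtain ⟨σ, hσs, hσred, hσπ⟩ := cs.subword_of_le hle (τ ++ [i]) hωred hωπ
    have hσlen : ℓ (π σ) = σ.length := hσred
    rcases sublist_concat_cases σ τ i hσs with hcase | ⟨σ₀, rfl, hσ₀s⟩
    · have hulen : ℓ u = σ.length := by rw [← hσπ]; exact hσlen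
      have husi : ℓ (u * s i) = ℓ u + 1 := by
        rcases cs.length_mul_simple u i with h | h <;> omega
      have hured : cs.IsReduced (σ ++ [i]) := by
        show ℓ (π (σ ++ [i])) = _
        rw [cs.wordProd_append, cs.wordProd_singleton, hσπ]
        simp only [List.length_append, List.length_singleton]
        omega
      have h1 := hCP (τ ++ [i]) (σ ++ [i])
        (by simp only [List.length_append, List.length_singleton]; omega)
        hωred (hcase.append (List.Sublist.refl [i])) hured
      rwa [hωπ, cs.wordProd_append, cs.wordProd_singleton, hσπ] at h1
    · exfalso
      have h1 : π (σ₀ ++ [i]) = π σ₀ * s i := by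
        rw [cs.wordProd_append, cs.wordProd_singleton]
      have h2 : u * s i = π σ₀ := by
        rw [← hσπ, h1, cs.simple_mul_simple_cancel_right]
      have h3 : ℓ (u * s i) ≤ σ₀.length := by
        rw [h2]; exact cs.length_wordProd_le σ₀
      have h4 : ℓ u = σ₀.length + 1 := by
        have h5 : ℓ (π (σ₀ ++ [i])) = (σ₀ ++ [i]).length := hσred
        rw [hσπ] at h5
        simpa using h5
      omega

  exact ⟨hCP, hK, hL⟩

private lemma bruhatLE_of_sublist {ω σ : List B} (hωred : cs.IsReduced ω)
    (hsub : σ.Sublist ω) (hσred : cs.IsReduced σ) : cs.bruhatLE (π σ) (π ω) :=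
  (cs.triple ω.length).1 ω σ le_rfl hωred hsub hσred


private lemma exists_Jword {J : Set B} {y : W} (hy : y ∈ Subgroup.closure (cs.simple '' J)) :
    ∃ τ : List B, (∀ l ∈ τ, l ∈ J) ∧ π τ = y := by
  induction hy using Subgroup.closure_induction with
  | mem x hx =>
    obtain ⟨i, hiJ, rfl⟩ := hx
    exact ⟨[i], by simpa using hiJ, by simp⟩
  | one => exact ⟨[], by simp, by simp⟩
  | mul x y hx hy ihx ihy =>
    obtain ⟨τ₁, h1, e1⟩ := ihx
    obtain ⟨τ₂, h2, e2⟩ := ihy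
    refine ⟨τ₁ ++ τ₂, ?_, by rw [cs.wordProd_append, e1, e2]⟩
    intro l hl
    rcases List.mem_append.mp hl with h | h
    · exact h1 l h
    · exact h2 l h
  | inv x hx ihx =>
    obtain ⟨τ, h1, e1⟩ := ihx
    exact ⟨τ.reverse, fun l hl => h1 l (List.mem_reverse.mp hl),
      by rw [cs.wordProd_reverse, e1]⟩

private lemma wordProd_mem_closure {J : Set B} {τ : List B} (h : ∀ l ∈ τ, l ∈ J) :
    π τ ∈ Subgroup.closure (cs.simple '' J) := by
  induction τ with
  | nil => rw [cs.wordProd_nil]; exact one_mem _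
  | cons i τ ih =>
    rw [cs.wordProd_cons]
    exact mul_mem (Subgroup.subset_closure ⟨i, h i (by simp), rfl⟩)
      (ih (fun l hl => h l (by simp [hl])))

private lemma length_mul_of_minimal {J : Set B} {x : W}
    (hx : ∀ z ∈ Subgroup.closure (cs.simple '' J), ℓ x ≤ ℓ (x * z)) :
    ∀ y ∈ Subgroup.closure (cs.simple '' J), ℓ (x * y) = ℓ x + ℓ y := by
  suffices h : ∀ n, ∀ y ∈ Subgroup.closure (cs.simple '' J), ℓ y ≤ n → ℓ (x * y) = ℓ x + ℓ y by
    exact fun y hy => h (ℓ y) y hy le_rfl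
  intro n
  induction n with
  | zero =>
    intro y _ h0
    have h1 : y = 1 := cs.length_eq_zero_iff.mp (by omega)
    subst h1
    simp
  | succ n ihn =>
    intro y hy hn
    rcases em (ℓ y ≤ n) with h | h
    · exact ihn y hy h
    have hly : ℓ y = n + 1 := by omega
    obtain ⟨τ₀, hτ₀J, hτ₀π⟩ := cs.exists_Jword hy
    obtain ⟨τ, hτs, hτred, hτπ⟩ := cs.deletion τ₀
    have hτJ : ∀ l ∈ τ, l ∈ J := fun l hl => hτ₀J l (hτs.subset hl)
    have hτy : π τ = y := by rw [hτπ, hτ₀π]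
    have hτlen : τ.length = n + 1 := by
      have h1 : ℓ (π τ) = τ.length := hτred
      rw [hτy] at h1
      omega
    rcases τ.eq_nil_or_concat with rfl | ⟨τ', j, rfl⟩
    · simp at hτlen
    rw [List.concat_eq_append] at *
    have hjJ : j ∈ J := hτJ j (by simp)
    have hy'mem : π τ' ∈ Subgroup.closure (cs.simple '' J) :=
      cs.wordProd_mem_closure (fun l hl => hτJ l (by simp [hl]))
    have hτ'red : cs.IsReduced τ' := by
      have h1 := hτred.take τ'.length
      rwa [List.take_left] at h1
    have hy'len : ℓ (π τ') = n := by
      have h1 : ℓ (π τ') = τ'.length := hτ'red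
      simp only [List.length_append, List.length_singleton] at hτlen
      omega
    have ihy' : ℓ (x * π τ') = ℓ x + n := by
      rw [ihn (π τ') hy'mem (by omega), hy'len]
    have hxy : x * y = (x * π τ') * s j := by
      rw [← hτy, cs.wordProd_append, cs.wordProd_singleton, mul_assoc]
    rcases cs.length_mul_simple (x * π τ') j with h1 | h1
    · rw [hxy, h1, ihy', hly]
      omega
    · exfalso
      obtain ⟨ρ, hρred', hρπ⟩ := cs.exists_reduced_word x
      have hρlen : ρ.length = ℓ x := by rw [hρπ]; exact hρred'.symm
      have hword : π (ρ ++ τ') = x * π τ' := by rw [cs.wordProd_append, ← hρπ]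
      have hlt : ℓ ((x * π τ') * s j) < ℓ (x * π τ') := by omega
      obtain ⟨k, hk, hke⟩ := cs.strongExchange (cs.isReflection_simple j) hlt (ρ ++ τ') hword
      rcases Nat.lt_or_ge k ρ.length with hkρ | hkρ
      · have herase : (ρ ++ τ').eraseIdx k = ρ.eraseIdx k ++ τ' :=
          List.eraseIdx_append_of_lt_length hkρ _
        have heq : x * (π τ' * s j * (π τ')⁻¹) = π (ρ.eraseIdx k) := by
          have h2 : π (ρ.eraseIdx k) * π τ' = (x * π τ') * s j := by
            rw [← cs.wordProd_append, ← herase, hke]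
          have h3 : π (ρ.eraseIdx k) = x * π τ' * s j * (π τ')⁻¹ := by
            rw [← h2]
            group
          rw [h3]
          group
        have hz : (π τ' * s j * (π τ')⁻¹) ∈ Subgroup.closure (cs.simple '' J) :=
          mul_mem (mul_mem hy'mem (Subgroup.subset_closure ⟨j, hjJ, rfl⟩)) (inv_mem hy'mem)
        have h4 : ℓ x ≤ ℓ (x * (π τ' * s j * (π τ')⁻¹)) := hx _ hz
        have h5 : ℓ (π (ρ.eraseIdx k)) ≤ (ρ.eraseIdx k).length := cs.length_wordProd_le _
        have h6 : (ρ.eraseIdx k).length + 1 = ρ.length := List.length_eraseIdx_add_one hkρ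
        rw [heq] at h4
        omega
      · have herase : (ρ ++ τ').eraseIdx k = ρ ++ τ'.eraseIdx (k - ρ.length) :=
          List.eraseIdx_append_of_length_le hkρ _
        have h2 : x * π (τ'.eraseIdx (k - ρ.length)) = (x * π τ') * s j := by
          rw [← hke, herase, cs.wordProd_append, hρπ]
        have h3 : π (τ'.eraseIdx (k - ρ.length)) = y := by
          have := h2
          rw [← hxy] at this
          exact mul_left_cancel this
        have h4 : ℓ y ≤ (τ'.eraseIdx (k - ρ.length)).length := by
          rw [← h3]
          exact cs.length_wordProd_le _
        have h5 : (τ'.eraseIdx (k - ρ.length)).length ≤ τ'.length := by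
          exact (List.eraseIdx_sublist _ _).length_le
        simp only [List.length_append, List.length_singleton] at hτlen
        omega

end
end CoxeterSystem

/-- Let `W` be a Coxeter group, `J ⊆ S`, and `w = w^J w_J` a parabolic
decomposition (`w^J = a` a minimal-length coset representative, `w_J = b ∈ W_J`).
Then the multiplication map `([e, w^J] ∩ W^J) × [e, w_J] → W` is injective, with
image contained in the Bruhat interval `[e, w]`. -/
theorem stmt_17 [Group W] {M : CoxeterMatrix B} (cs : CoxeterSystem M W)
    (J : Set B) (w a b : W)
    (haJ : ∀ z ∈ Subgroup.closure (cs.simple '' J), cs.length a ≤ cs.length (a * z))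
    (hb : b ∈ Subgroup.closure (cs.simple '' J))
    (hw : w = a * b) :
    (∀ x₁ x₂ y₁ y₂ : W,
      (∀ z ∈ Subgroup.closure (cs.simple '' J), cs.length x₁ ≤ cs.length (x₁ * z)) →
      cs.bruhatLE x₁ a →
      (∀ z ∈ Subgroup.closure (cs.simple '' J), cs.length x₂ ≤ cs.length (x₂ * z)) →
      cs.bruhatLE x₂ a →
      y₁ ∈ Subgroup.closure (cs.simple '' J) → cs.bruhatLE y₁ b →
      y₂ ∈ Subgroup.closure (cs.simple '' J) → cs.bruhatLE y₂ b →
      x₁ * y₁ = x₂ * y₂ → x₁ = x₂ ∧ y₁ = y₂) ∧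
    (∀ x y : W,
      (∀ z ∈ Subgroup.closure (cs.simple '' J), cs.length x ≤ cs.length (x * z)) →
      cs.bruhatLE x a →
      y ∈ Subgroup.closure (cs.simple '' J) → cs.bruhatLE y b →
      cs.bruhatLE (x * y) w) := by
  constructor
  · intro x₁ x₂ y₁ y₂ hx₁ _ hx₂ _ hy₁ _ hy₂ _ heq
    have hzH : y₁ * y₂⁻¹ ∈ Subgroup.closure (cs.simple '' J) := mul_mem hy₁ (inv_mem hy₂)
    have e1 : x₂ = x₁ * (y₁ * y₂⁻¹) := by
      rw [← mul_assoc, heq, mul_assoc, mul_inv_cancel, mul_one]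
    have e2 : x₁ = x₂ * (y₁ * y₂⁻¹)⁻¹ := by rw [e1, mul_assoc, mul_inv_cancel, mul_one]
    have l1 : cs.length x₂ = cs.length x₁ + cs.length (y₁ * y₂⁻¹) := by
      rw [e1]; exact cs.length_mul_of_minimal hx₁ _ hzH
    have l2 : cs.length x₁ = cs.length x₂ + cs.length (y₁ * y₂⁻¹)⁻¹ := by
      rw [e2]; exact cs.length_mul_of_minimal hx₂ _ (inv_mem hzH)
    have l3 : cs.length (y₁ * y₂⁻¹)⁻¹ = cs.length (y₁ * y₂⁻¹) := cs.length_inv _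
    have hz1 : y₁ * y₂⁻¹ = (1 : W) := cs.length_eq_zero_iff.mp (by omega)
    have hx : x₁ = x₂ := by rw [e1, hz1, mul_one]
    refine ⟨hx, ?_⟩
    rw [hx] at heq
    exact mul_left_cancel heq
  · intro x y hxmin hxa hyH hyb
    obtain ⟨ωa, hared, haπ⟩ := cs.exists_reduced_word' a
    obtain ⟨ωb, hbred, hbπ⟩ := cs.exists_reduced_word' b
    obtain ⟨σx, hσxs, hσxred, hσxπ⟩ := cs.subword_of_le hxa ωa hared haπ.symm
    obtain ⟨σy, hσys, hσyred, hσyπ⟩ := cs.subword_of_le hyb ωb hbred hbπ.symm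
    have la : cs.length a = ωa.length := by rw [haπ]; exact hared
    have lb : cs.length b = ωb.length := by rw [hbπ]; exact hbred
    have lx : cs.length x = σx.length := by rw [← hσxπ]; exact hσxred
    have ly : cs.length y = σy.length := by rw [← hσyπ]; exact hσyred
    have hΩred : cs.IsReduced (ωa ++ ωb) := by
      show cs.length (cs.wordProd (ωa ++ ωb)) = (ωa ++ ωb).length
      rw [cs.wordProd_append, ← haπ, ← hbπ, cs.length_mul_of_minimal haJ b hb]
      simp only [List.length_append]
      omega
    have hσred : cs.IsReduced (σx ++ σy) := by
      show cs.length (cs.wordProd (σx ++ σy)) = (σx ++ σy).length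
      rw [cs.wordProd_append, hσxπ, hσyπ, cs.length_mul_of_minimal hxmin y hyH]
      simp only [List.length_append]
      omega
    have hsub : (σx ++ σy).Sublist (ωa ++ ωb) := hσxs.append hσys
    have h1 := cs.bruhatLE_of_sublist hΩred hsub hσred
    rwa [cs.wordProd_append, cs.wordProd_append, hσxπ, hσyπ, ← haπ, ← hbπ, ← hw] at h1
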